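/- Let H be a graded real Poincaré duality algebra of top degree d, ℓ ∈ H^1 such that (H, ℓ) satisfies the Hard Lefschetz property, and 0 ≤ m ≤ d/2. Then (H, ℓ) satisfies the Hodge–Riemann relations in degrees up to m if and only if for every i ≤ m, the signature of the quadratic form Q_ℓ(x) = deg(x² ℓ^{d-2i}) on H^i equals ∑_{j=0}^i (-1)^j dim(P^j). -/

import Mathlib

section PDAlg

variable (A : Type) [CommRing A] [Algebra ℝ A]

/-- `IsPDAlgebra A g d dg` says that the grading `g` makes `A` a finite-dimensional graded
commutative `ℝ`-algebra with top degree `d`, and `dg` identifies the top graded piece with `ℝ`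
so that the multiplication pairing `g i × g (d-i) → ℝ` is non-degenerate (Poincaré duality). -/
def IsPDAlgebra (g : ℕ → Submodule ℝ A) (d : ℕ) (dg : A →ₗ[ℝ] ℝ) : Prop :=
  DirectSum.IsInternal g ∧
  (∀ i j, g i * g j ≤ g (i + j)) ∧
  (1 : A) ∈ g 0 ∧
  (∀ k, d < k → g k = ⊥) ∧
  FiniteDimensional ℝ A ∧
  (∀ k, k ≠ d → ∀ x ∈ g k, dg x = 0) ∧
  Function.Bijective (fun x : g d => dg x) ∧
  (∀ i, i ≤ d → ∀ x ∈ g i, (∀ y ∈ g (d - i), dg (x * y) = 0) → x = 0)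

/-- Multiplication by `ℓ ^ (d - 2i)` is an isomorphism `H^i → H^(d-i)`. -/
def HardLefschetzAt (g : ℕ → Submodule ℝ A) (d i : ℕ) (ℓ : A) : Prop :=
  (∀ x ∈ g i, ℓ ^ (d - 2 * i) * x = 0 → x = 0) ∧
  ∀ y ∈ g (d - i), ∃ x ∈ g i, ℓ ^ (d - 2 * i) * x = y

def HardLefschetz (g : ℕ → Submodule ℝ A) (d : ℕ) (ℓ : A) : Prop :=
  ∀ i, 2 * i ≤ d → HardLefschetzAt A g d i ℓ

/-- The primitive part `P^i = ker (ℓ^(d-2i+1) : H^i → H^(d-i+1))`. -/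
noncomputable def Primitive (g : ℕ → Submodule ℝ A) (d i : ℕ) (ℓ : A) : Submodule ℝ A :=
  g i ⊓ LinearMap.ker (LinearMap.mulLeft ℝ (ℓ ^ (d - 2 * i + 1)))

/-- `(-1)^i Q_ℓ` is positive definite on the primitive part `P^i`. -/
def HodgeRiemannAt (g : ℕ → Submodule ℝ A) (d : ℕ) (dg : A →ₗ[ℝ] ℝ) (i : ℕ) (ℓ : A) : Prop :=
  ∀ x ∈ Primitive A g d i ℓ, x ≠ 0 → 0 < (-1 : ℝ) ^ i * dg (x * x * ℓ ^ (d - 2 * i))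

def HodgeRiemann (g : ℕ → Submodule ℝ A) (d : ℕ) (dg : A →ₗ[ℝ] ℝ) (ℓ : A) : Prop :=
  ∀ i, 2 * i ≤ d → HodgeRiemannAt A g d dg i ℓ

/-- The maximal dimension of a subspace of `W` on which the quadratic form `q` is positive
definite. -/
noncomputable def posIndexOn (W : Submodule ℝ A) (q : A → ℝ) : ℕ :=
  sSup {n : ℕ | ∃ U : Submodule ℝ A, U ≤ W ∧ Module.finrank ℝ U = n ∧ ∀ x ∈ U, x ≠ 0 → 0 < q x}

/-- The signature of the quadratic form `q` on the subspace `W`. -/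
noncomputable def signatureOn (W : Submodule ℝ A) (q : A → ℝ) : ℤ :=
  (posIndexOn A W q : ℤ) - (posIndexOn A W (fun x => - q x) : ℤ)

end PDAlg


open Module

section AuxIndex
variable {A : Type} [CommRing A] [Algebra ℝ A]

lemma posIndexOn_eq_of_decomp [FiniteDimensional ℝ A] {q : A → ℝ}
    {U V W : Submodule ℝ A} (hUV : U ⊔ V = W)
    (hU : ∀ x ∈ U, x ≠ 0 → 0 < q x) (hV : ∀ x ∈ V, x ≠ 0 → q x < 0) :
    posIndexOn A W q = finrank ℝ U := by
  have hUW : U ≤ W := hUV ▸ le_sup_left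
  have hVW : V ≤ W := hUV ▸ le_sup_right
  have hmem : finrank ℝ U ∈ {n : ℕ | ∃ U' : Submodule ℝ A, U' ≤ W ∧
      Module.finrank ℝ U' = n ∧ ∀ x ∈ U', x ≠ 0 → 0 < q x} := ⟨U, hUW, rfl, hU⟩
  have hbd : ∀ n ∈ {n : ℕ | ∃ U' : Submodule ℝ A, U' ≤ W ∧
      Module.finrank ℝ U' = n ∧ ∀ x ∈ U', x ≠ 0 → 0 < q x}, n ≤ finrank ℝ U := by
    rintro n ⟨S, hSW, rfl, hS⟩
    have hdisj : S ⊓ V = ⊥ := by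
      rw [eq_bot_iff]
      rintro x hx
      rcases Submodule.mem_inf.mp hx with ⟨hxS, hxV⟩
      by_contra hne
      have h0 : x ≠ 0 := fun h => hne (h ▸ Submodule.zero_mem ⊥)
      have := hS x hxS h0
      have := hV x hxV h0
      linarith
    have h1 := Submodule.finrank_sup_add_finrank_inf_eq S V
    have h2 := Submodule.finrank_sup_add_finrank_inf_eq U V
    have h3 : finrank ℝ ↥(S ⊔ V) ≤ finrank ℝ ↥W :=
      Submodule.finrank_mono (sup_le hSW hVW)
    have h4 : finrank ℝ ↥(U ⊔ V) = finrank ℝ ↥W := by rw [hUV]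
    rw [hdisj] at h1
    simp [finrank_bot] at h1
    omega
  exact le_antisymm (csSup_le ⟨_, hmem⟩ hbd) (le_csSup ⟨finrank ℝ U, hbd⟩ hmem)

lemma signatureOn_eq_of_decomp [FiniteDimensional ℝ A] {q : A → ℝ}
    {U V W : Submodule ℝ A} (hUV : U ⊔ V = W)
    (hU : ∀ x ∈ U, x ≠ 0 → 0 < q x) (hV : ∀ x ∈ V, x ≠ 0 → q x < 0) :
    signatureOn A W q = (finrank ℝ U : ℤ) - finrank ℝ V := by
  have hVU : V ⊔ U = W := by rw [sup_comm]; exact hUV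
  rw [signatureOn, posIndexOn_eq_of_decomp hUV hU hV,
    posIndexOn_eq_of_decomp (q := fun x => -q x) hVU
      (fun x hx h0 => by simpa using hV x hx h0)
      (fun x hx h0 => by simpa using hU x hx h0)]

lemma bilin_self_eq_sum' {n : ℕ} {M : Type*} [AddCommGroup M] [Module ℝ M]
    (B : LinearMap.BilinForm ℝ M) (v : Basis (Fin n) ℝ M) (hv : B.IsOrthoᵢ v) (x : M) :
    B x x = ∑ i, (v.repr x i)^2 * B (v i) (v i) := by
  conv_lhs => rw [← v.sum_repr x]
  simp only [map_sum, LinearMap.sum_apply, map_smul, LinearMap.smul_apply, smul_eq_mul]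
  refine Finset.sum_congr rfl (fun j _ => ?_)
  rw [Finset.sum_eq_single j (fun i _ hij => by rw [hv hij]; ring) (by simp)]
  ring

lemma exists_posneg_split [FiniteDimensional ℝ A]
    (φ : A →ₗ[ℝ] A →ₗ[ℝ] ℝ) (hsymm : ∀ x y, φ x y = φ y x)
    (W : Submodule ℝ A) (hnd : ∀ x ∈ W, (∀ y ∈ W, φ x y = 0) → x = 0) :
    ∃ P N : Submodule ℝ A, P ≤ W ∧ N ≤ W ∧ P ⊔ N = W ∧
      finrank ℝ P + finrank ℝ N = finrank ℝ W ∧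
      (∀ x ∈ P, x ≠ 0 → 0 < φ x x) ∧ (∀ x ∈ N, x ≠ 0 → φ x x < 0) := by
  classical
  set B : LinearMap.BilinForm ℝ ↥W := φ.compl₁₂ W.subtype W.subtype with hB
  have hBapp : ∀ x y : ↥W, B x y = φ (x : A) (y : A) := fun x y => rfl
  have hBsymm : B.IsSymm := ⟨fun x y => by
    simp only [RingHom.id_apply, hBapp]; exact hsymm _ _⟩
  obtain ⟨v, hv⟩ := LinearMap.BilinForm.exists_orthogonal_basis (LinearMap.BilinForm.isSymm_iff.mp hBsymm)
  have hdiag : ∀ k, B (v k) (v k) ≠ 0 := by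
    intro k hk
    have hker : ∀ y : ↥W, B (v k) y = 0 := by
      intro y
      have htop : (⊤ : Submodule ℝ ↥W) ≤ LinearMap.ker (B (v k)) := by
        rw [← v.span_eq]
        refine Submodule.span_le.mpr ?_
        rintro _ ⟨i, rfl⟩
        simp only [SetLike.mem_coe, LinearMap.mem_ker]
        rcases eq_or_ne k i with rfl | hki
        · exact hk
        · exact hv hki
      exact LinearMap.mem_ker.mp (htop (Submodule.mem_top))
    have h0 : ((v k : A)) = 0 :=
      hnd (v k) (v k).2 (fun y hy => by rw [← hBapp (v k) ⟨y, hy⟩]; exact hker ⟨y, hy⟩)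
    exact v.ne_zero k (Subtype.ext h0)
  set s : Set (Fin (finrank ℝ ↥W)) := {k | 0 < B (v k) (v k)} with hs
  have main : ∀ (t : Set (Fin (finrank ℝ ↥W))) (c : ℝ),
      (∀ k ∈ t, 0 < c * B (v k) (v k)) →
      ∀ x ∈ (Submodule.span ℝ (v '' t)).map W.subtype, x ≠ 0 → 0 < c * φ x x := by
    rintro t c hc x ⟨y, hy, rfl⟩ hx0
    have hsupp : ↑(v.repr y).support ⊆ t := v.mem_span_image.mp hy
    have hyy : (φ (W.subtype y)) (W.subtype y) = B y y := rfl
    rw [hyy, bilin_self_eq_sum' B v hv y, Finset.mul_sum]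
    rw [← Finset.sum_subset (Finset.subset_univ (v.repr y).support) (fun i _ hi => by
         rw [Finsupp.notMem_support_iff.mp hi]; ring)]
    apply Finset.sum_pos
    · intro i hi
      have hci := hc i (hsupp hi)
      have hne : v.repr y i ≠ 0 := Finsupp.mem_support_iff.mp hi
      have h2 : 0 < (v.repr y i)^2 := by positivity
      nlinarith
    · rw [Finsupp.support_nonempty_iff]
      intro h
      apply hx0
      have hy0 : y = 0 := v.repr.map_eq_zero_iff.mp h
      rw [hy0]; simp
  have hpos := main s 1 (fun k hk => by simpa [hs] using hk)
  have hneg := main sᶜ (-1) (fun k hk => by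
    rcases lt_trichotomy (B (v k) (v k)) 0 with h | h | h
    · nlinarith
    · exact absurd h (hdiag k)
    · exact absurd h hk)
  simp only [one_mul] at hpos
  refine ⟨(Submodule.span ℝ (v '' s)).map W.subtype,
    (Submodule.span ℝ (v '' sᶜ)).map W.subtype,
    Submodule.map_subtype_le W _, Submodule.map_subtype_le W _, ?_, ?_,
    hpos, fun x hx h0 => by have := hneg x hx h0; linarith⟩
  · rw [← Submodule.map_sup, ← Submodule.span_union, ← Set.image_union, Set.union_compl_self,
      Set.image_univ, v.span_eq, Submodule.map_top, Submodule.range_subtype]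
  · have hdisj : (Submodule.span ℝ (v '' s)).map W.subtype ⊓
        (Submodule.span ℝ (v '' sᶜ)).map W.subtype = ⊥ := by
      rw [eq_bot_iff]
      rintro x hx
      rcases Submodule.mem_inf.mp hx with ⟨h1, h2⟩
      by_contra hne
      have h0 : x ≠ 0 := fun h => hne (h ▸ Submodule.zero_mem ⊥)
      have := hpos x h1 h0
      have := hneg x h2 h0
      linarith
    have := Submodule.finrank_sup_add_finrank_inf_eq
      ((Submodule.span ℝ (v '' s)).map W.subtype) ((Submodule.span ℝ (v '' sᶜ)).map W.subtype)
    rw [hdisj] at this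
    rw [← Submodule.map_sup, ← Submodule.span_union, ← Set.image_union, Set.union_compl_self,
      Set.image_univ, v.span_eq, Submodule.map_top, Submodule.range_subtype] at this
    simpa [finrank_bot] using this.symm

end AuxIndex

section AuxStructure
variable {A : Type} [CommRing A] [Algebra ℝ A]
variable {g : ℕ → Submodule ℝ A} {d : ℕ} {dg : A →ₗ[ℝ] ℝ} {ℓ : A}

lemma mul_mem_g (hg : ∀ i j, g i * g j ≤ g (i + j)) {i j : ℕ} {x y : A}
    (hx : x ∈ g i) (hy : y ∈ g j) : x * y ∈ g (i + j) :=
  hg i j (Submodule.mul_mem_mul hx hy)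

lemma pow_mem_g (hg : ∀ i j, g i * g j ≤ g (i + j)) (h1 : (1:A) ∈ g 0) (hℓ : ℓ ∈ g 1) :
    ∀ k, ℓ ^ k ∈ g k := by
  intro k
  induction k with
  | zero => simpa using h1
  | succ n ih =>
      have := mul_mem_g hg ih hℓ
      rwa [← pow_succ] at this

lemma mem_primitive {i : ℕ} {x : A} :
    x ∈ Primitive A g d i ℓ ↔ x ∈ g i ∧ ℓ ^ (d - 2*i + 1) * x = 0 := by
  simp [Primitive, Submodule.mem_inf, LinearMap.mem_ker]

lemma ell_inj (hHL : HardLefschetz A g d ℓ) {i : ℕ} (hi : 2*i + 1 ≤ d) :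
    ∀ x ∈ g i, ℓ * x = 0 → x = 0 := by
  intro x hx h
  refine (hHL i (by omega)).1 x hx ?_
  have he : ℓ ^ (d - 2*i) = ℓ ^ (d - 2*i - 1) * ℓ := by
    rw [← pow_succ]; congr 1; omega
  rw [he, mul_assoc, h, mul_zero]

lemma primitive_zero (hPD : IsPDAlgebra A g d dg) (hℓ : ℓ ∈ g 1) :
    Primitive A g d 0 ℓ = g 0 := by
  have hg := hPD.2.1
  have h1 := hPD.2.2.1
  have htop := hPD.2.2.2.1
  have hpow : ℓ ^ (d + 1) ∈ g (d+1) := pow_mem_g hg h1 hℓ (d+1)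
  rw [htop (d+1) (by omega)] at hpow
  have h0 : ℓ ^ (d + 1) = (0:A) := hpow
  apply le_antisymm inf_le_left
  intro x hx
  exact mem_primitive.mpr ⟨hx, by
    have he : d - 2*0 + 1 = d + 1 := by omega
    rw [he, h0, zero_mul]⟩

lemma map_inf_primitive (hHL : HardLefschetz A g d ℓ) {i : ℕ} (hi : 2*(i+1) ≤ d) :
    Submodule.map (LinearMap.mulLeft ℝ ℓ) (g i) ⊓ Primitive A g d (i+1) ℓ = ⊥ := by
  rw [eq_bot_iff]
  rintro x hx
  rcases Submodule.mem_inf.mp hx with ⟨⟨y, hy, rfl⟩, hprim⟩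
  simp only [LinearMap.mulLeft_apply] at hprim ⊢
  rcases mem_primitive.mp hprim with ⟨-, hker⟩
  have h0 : ℓ ^ (d - 2*i) * y = 0 := by
    have he : d - 2*i = (d - 2*(i+1) + 1) + 1 := by omega
    rw [he, pow_succ, mul_assoc, hker]
  have hy0 : y = 0 := (hHL i (by omega)).1 y hy h0
  simp [hy0]

lemma map_sup_primitive (hPD : IsPDAlgebra A g d dg) (hℓ : ℓ ∈ g 1)
    (hHL : HardLefschetz A g d ℓ) {i : ℕ} (hi : 2*(i+1) ≤ d) :
    Submodule.map (LinearMap.mulLeft ℝ ℓ) (g i) ⊔ Primitive A g d (i+1) ℓ = g (i+1) := by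
  have hg := hPD.2.1
  have h1 := hPD.2.2.1
  apply le_antisymm
  · refine sup_le ?_ inf_le_left
    rintro x ⟨y, hy, rfl⟩
    simp only [LinearMap.mulLeft_apply]
    have := mul_mem_g hg hℓ hy
    rwa [Nat.add_comm] at this
  · intro x hx
    have hz : ℓ ^ (d - 2*(i+1) + 1) * x ∈ g (d - i) := by
      have := mul_mem_g hg (pow_mem_g hg h1 hℓ (d - 2*(i+1)+1)) hx
      have he : (d - 2*(i+1) + 1) + (i+1) = d - i := by omega
      rwa [he] at this
    obtain ⟨y, hy, hxy⟩ := (hHL i (by omega)).2 _ hz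
    refine Submodule.mem_sup.mpr ⟨ℓ * y, ⟨y, hy, by simp⟩, x - ℓ * y, ?_, by ring⟩
    rw [mem_primitive]
    constructor
    · refine Submodule.sub_mem _ hx ?_
      have := mul_mem_g hg hℓ hy
      rwa [Nat.add_comm] at this
    · have hkey : ℓ ^ (d-2*(i+1)+1) * (x - ℓ*y) =
          ℓ^(d-2*(i+1)+1) * x - ℓ^(d-2*i) * y := by
        have he2 : d - 2*i = (d - 2*(i+1) + 1) + 1 := by omega
        rw [he2, pow_succ]; ring
      rw [hkey, hxy, sub_self]

lemma primitive_nondeg (hPD : IsPDAlgebra A g d dg) (hℓ : ℓ ∈ g 1)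
    (hHL : HardLefschetz A g d ℓ) {i : ℕ} (hi : 2*i ≤ d) :
    ∀ x ∈ Primitive A g d i ℓ,
      (∀ y ∈ Primitive A g d i ℓ, dg (x*y*ℓ^(d-2*i)) = 0) → x = 0 := by
  intro x hxP hxy
  have hg := hPD.2.1
  have h1 := hPD.2.2.1
  have hpd := hPD.2.2.2.2.2.2.2
  obtain ⟨hxg, hxk⟩ := mem_primitive.mp hxP
  have hall : ∀ y ∈ g i, dg (x*y*ℓ^(d-2*i)) = 0 := by
    rcases Nat.eq_zero_or_pos i with rfl | hpos
    · intro y hy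
      exact hxy y (by rw [primitive_zero hPD hℓ]; exact hy)
    · obtain ⟨k, rfl⟩ : ∃ k, i = k + 1 := ⟨i-1, by omega⟩
      intro y hy
      rw [← map_sup_primitive hPD hℓ hHL hi] at hy
      rcases Submodule.mem_sup.mp hy with ⟨a, ⟨u, hu, rfl⟩, p, hp, rfl⟩
      simp only [LinearMap.mulLeft_apply]
      have harg : x * (ℓ * u + p) * ℓ^(d-2*(k+1)) =
          u * (ℓ^(d-2*(k+1)+1) * x) + x * p * ℓ^(d-2*(k+1)) := by
        rw [pow_succ]; ring
      rw [harg, hxk, mul_zero, zero_add]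
      exact hxy p hp
  have hw : ℓ^(d-2*i) * x ∈ g (d - i) := by
    have := mul_mem_g hg (pow_mem_g hg h1 hℓ (d-2*i)) hxg
    have he : (d - 2*i) + i = d - i := by omega
    rwa [he] at this
  have hw0 : ℓ^(d-2*i) * x = 0 := by
    apply hpd (d - i) (by omega) _ hw
    intro y hy
    have hdi : d - (d - i) = i := by omega
    rw [hdi] at hy
    have harg : (ℓ^(d-2*i) * x) * y = x * y * ℓ^(d-2*i) := by ring
    rw [harg]; exact hall y hy
  exact (hHL i (by omega)).1 x hxg hw0

lemma dg_polar (dg : A →ₗ[ℝ] ℝ) (a p c : A) :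
    dg ((a+p)*(a+p)*c) = dg (a*a*c) + dg (p*p*c) + (dg (a*p*c) + dg (a*p*c)) := by
  have h : (a+p)*(a+p)*c = a*a*c + (p*p*c + (a*p*c + a*p*c)) := by ring
  rw [h, map_add, map_add, map_add]; ring

lemma finrank_map_of_injOn [FiniteDimensional ℝ A] (f : A →ₗ[ℝ] A) (U : Submodule ℝ A)
    (hf : ∀ x ∈ U, f x = 0 → x = 0) :
    finrank ℝ (U.map f) = finrank ℝ U := by
  have h1 : U.map f = LinearMap.range (f ∘ₗ U.subtype) := by
    rw [LinearMap.range_comp, Submodule.range_subtype]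
  have h2 := LinearMap.finrank_range_add_finrank_ker (f ∘ₗ U.subtype)
  have h3 : LinearMap.ker (f ∘ₗ U.subtype) = ⊥ := by
    rw [eq_bot_iff]
    rintro x hx
    rw [LinearMap.mem_ker, LinearMap.comp_apply] at hx
    have := hf x x.2 hx
    exact (Submodule.mem_bot ℝ).mpr (Subtype.ext this)
  rw [h3, finrank_bot] at h2
  rw [h1]
  omega

lemma hr_split [FiniteDimensional ℝ A] {i : ℕ} (hhr : HodgeRiemannAt A g d dg i ℓ) :
    ∃ P N : Submodule ℝ A, P ⊔ N = Primitive A g d i ℓ ∧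
      (∀ x ∈ P, x ≠ 0 → 0 < dg (x*x*ℓ^(d-2*i))) ∧
      (∀ x ∈ N, x ≠ 0 → dg (x*x*ℓ^(d-2*i)) < 0) ∧
      (finrank ℝ P : ℤ) - finrank ℝ N =
        (-1:ℤ)^i * finrank ℝ (Primitive A g d i ℓ) := by
  rcases Nat.even_or_odd i with he | ho
  · refine ⟨Primitive A g d i ℓ, ⊥, sup_bot_eq _, fun x hx h0 => ?_,
      fun x hx h0 => absurd ((Submodule.mem_bot ℝ).mp hx) h0, ?_⟩
    · have := hhr x hx h0
      rwa [he.neg_one_pow, one_mul] at this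
    · rw [he.neg_one_pow, one_mul]
      simp [finrank_bot]
  · refine ⟨⊥, Primitive A g d i ℓ, bot_sup_eq _,
      fun x hx h0 => absurd ((Submodule.mem_bot ℝ).mp hx) h0, fun x hx h0 => ?_, ?_⟩
    · have := hhr x hx h0
      rw [ho.neg_one_pow] at this
      linarith
    · rw [ho.neg_one_pow]
      simp [finrank_bot]

lemma decomp (hPD : IsPDAlgebra A g d dg) (hℓ : ℓ ∈ g 1) (hHL : HardLefschetz A g d ℓ) :
    ∀ i, 2 * i ≤ d → (∀ j, j < i → HodgeRiemannAt A g d dg j ℓ) →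
    ∀ P N : Submodule ℝ A, P ⊔ N = Primitive A g d i ℓ →
    (∀ x ∈ P, x ≠ 0 → 0 < dg (x*x*ℓ^(d-2*i))) →
    (∀ x ∈ N, x ≠ 0 → dg (x*x*ℓ^(d-2*i)) < 0) →
    ∃ U V : Submodule ℝ A, U ⊔ V = g i ∧
      (∀ x ∈ U, x ≠ 0 → 0 < dg (x*x*ℓ^(d-2*i))) ∧
      (∀ x ∈ V, x ≠ 0 → dg (x*x*ℓ^(d-2*i)) < 0) ∧
      (finrank ℝ U : ℤ) - finrank ℝ V =
        (∑ j ∈ Finset.range i, (-1:ℤ)^j * (finrank ℝ (Primitive A g d j ℓ) : ℤ))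
        + (finrank ℝ P : ℤ) - finrank ℝ N := by
  haveI : FiniteDimensional ℝ A := hPD.2.2.2.2.1
  intro i
  induction i with
  | zero =>
    intro _ _ P N hPN hP hN
    exact ⟨P, N, by rw [hPN, primitive_zero hPD hℓ], hP, hN, by simp⟩
  | succ i ih =>
    intro hi hHR P N hPN hP hN
    obtain ⟨P₀, N₀, hPN₀, hP₀, hN₀, hd₀⟩ := hr_split (hHR i (Nat.lt_succ_self i))
    obtain ⟨U', V', hsup', hpos', hneg', hdiff'⟩ :=
      ih (by omega) (fun j hj => hHR j (by omega)) P₀ N₀ hPN₀ hP₀ hN₀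
    have hU'le : U' ≤ g i := hsup' ▸ le_sup_left
    have hV'le : V' ≤ g i := hsup' ▸ le_sup_right
    have hPle : P ≤ Primitive A g d (i+1) ℓ := hPN ▸ le_sup_left
    have hNle : N ≤ Primitive A g d (i+1) ℓ := hPN ▸ le_sup_right
    have posdefside : ∀ (U₁ P₁ : Submodule ℝ A), U₁ ≤ g i →
        P₁ ≤ Primitive A g d (i+1) ℓ →
        (∀ x ∈ U₁, x ≠ 0 → 0 < dg (x*x*ℓ^(d-2*i))) →
        (∀ x ∈ P₁, x ≠ 0 → 0 < dg (x*x*ℓ^(d-2*(i+1)))) →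
        ∀ x ∈ Submodule.map (LinearMap.mulLeft ℝ ℓ) U₁ ⊔ P₁, x ≠ 0 →
          0 < dg (x*x*ℓ^(d-2*(i+1))) := by
      intro U₁ P₁ hU₁ hP₁ hq hqp x hx hx0
      rcases Submodule.mem_sup.mp hx with ⟨a, ha, p, hp, rfl⟩
      rcases ha with ⟨u, hu, rfl⟩
      simp only [LinearMap.mulLeft_apply] at hx0 ⊢
      have hpk : ℓ ^ (d - 2*(i+1) + 1) * p = 0 := (mem_primitive.mp (hP₁ hp)).2
      have hcross : dg ((ℓ*u) * p * ℓ^(d-2*(i+1))) = 0 := by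
        have harg : (ℓ*u) * p * ℓ^(d-2*(i+1)) = u * (ℓ^(d-2*(i+1)+1) * p) := by
          rw [pow_succ]; ring
        rw [harg, hpk, mul_zero, map_zero]
      have hiso : dg ((ℓ*u) * (ℓ*u) * ℓ^(d-2*(i+1))) = dg (u*u*ℓ^(d-2*i)) := by
        have harg : (ℓ*u) * (ℓ*u) * ℓ^(d-2*(i+1)) = u*u*ℓ^(d-2*i) := by
          have he : d - 2*i = (d - 2*(i+1)) + 2 := by omega
          rw [he, pow_add]; ring
        rw [harg]
      have hpolar := dg_polar dg (ℓ*u) p (ℓ^(d-2*(i+1)))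
      rw [hcross, hiso] at hpolar
      have hQp' : 0 ≤ dg (p*p*ℓ^(d-2*(i+1))) := by
        rcases eq_or_ne p 0 with rfl | h
        · simp
        · exact (hqp p hp h).le
      rcases eq_or_ne (ℓ*u) 0 with h | h
      · have hp0 : p ≠ 0 := fun hp0 => hx0 (by rw [h, hp0, add_zero])
        rw [show ℓ*u + p = p by rw [h, zero_add]]
        exact hqp p hp hp0
      · have hu0 : u ≠ 0 := by rintro rfl; rw [mul_zero] at h; exact h rfl
        have h1 := hq u hu hu0
        rw [hpolar]
        linarith
    have negdefside : ∀ (V₁ N₁ : Submodule ℝ A), V₁ ≤ g i →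
        N₁ ≤ Primitive A g d (i+1) ℓ →
        (∀ x ∈ V₁, x ≠ 0 → dg (x*x*ℓ^(d-2*i)) < 0) →
        (∀ x ∈ N₁, x ≠ 0 → dg (x*x*ℓ^(d-2*(i+1))) < 0) →
        ∀ x ∈ Submodule.map (LinearMap.mulLeft ℝ ℓ) V₁ ⊔ N₁, x ≠ 0 →
          dg (x*x*ℓ^(d-2*(i+1))) < 0 := by
      intro V₁ N₁ hV₁ hN₁ hq hqn x hx hx0
      rcases Submodule.mem_sup.mp hx with ⟨a, ha, p, hp, rfl⟩
      rcases ha with ⟨u, hu, rfl⟩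
      simp only [LinearMap.mulLeft_apply] at hx0 ⊢
      have hpk : ℓ ^ (d - 2*(i+1) + 1) * p = 0 := (mem_primitive.mp (hN₁ hp)).2
      have hcross : dg ((ℓ*u) * p * ℓ^(d-2*(i+1))) = 0 := by
        have harg : (ℓ*u) * p * ℓ^(d-2*(i+1)) = u * (ℓ^(d-2*(i+1)+1) * p) := by
          rw [pow_succ]; ring
        rw [harg, hpk, mul_zero, map_zero]
      have hiso : dg ((ℓ*u) * (ℓ*u) * ℓ^(d-2*(i+1))) = dg (u*u*ℓ^(d-2*i)) := by
        have harg : (ℓ*u) * (ℓ*u) * ℓ^(d-2*(i+1)) = u*u*ℓ^(d-2*i) := by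
          have he : d - 2*i = (d - 2*(i+1)) + 2 := by omega
          rw [he, pow_add]; ring
        rw [harg]
      have hpolar := dg_polar dg (ℓ*u) p (ℓ^(d-2*(i+1)))
      rw [hcross, hiso] at hpolar
      have hQp' : dg (p*p*ℓ^(d-2*(i+1))) ≤ 0 := by
        rcases eq_or_ne p 0 with rfl | h
        · simp
        · exact (hqn p hp h).le
      rcases eq_or_ne (ℓ*u) 0 with h | h
      · have hp0 : p ≠ 0 := fun hp0 => hx0 (by rw [h, hp0, add_zero])
        rw [show ℓ*u + p = p by rw [h, zero_add]]
        exact hqn p hp hp0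
      · have hu0 : u ≠ 0 := by rintro rfl; rw [mul_zero] at h; exact h rfl
        have h1 := hq u hu hu0
        rw [hpolar]
        linarith
    refine ⟨Submodule.map (LinearMap.mulLeft ℝ ℓ) U' ⊔ P,
      Submodule.map (LinearMap.mulLeft ℝ ℓ) V' ⊔ N, ?_, ?_, ?_, ?_⟩
    · rw [sup_sup_sup_comm, ← Submodule.map_sup, hsup', hPN,
        map_sup_primitive hPD hℓ hHL hi]
    · exact posdefside U' P hU'le hPle hpos' hP
    · exact negdefside V' N hV'le hNle hneg' hN
    · have hinj : ∀ x ∈ g i, (LinearMap.mulLeft ℝ ℓ) x = 0 → x = 0 := by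
        intro x hxg hx
        exact ell_inj hHL (by omega) x hxg (by simpa using hx)
      have hrk1 : finrank ℝ (U'.map (LinearMap.mulLeft ℝ ℓ)) = finrank ℝ U' :=
        finrank_map_of_injOn _ _ (fun x hxU h => hinj x (hU'le hxU) h)
      have hrk2 : finrank ℝ (V'.map (LinearMap.mulLeft ℝ ℓ)) = finrank ℝ V' :=
        finrank_map_of_injOn _ _ (fun x hxV h => hinj x (hV'le hxV) h)
      have hdis1 : U'.map (LinearMap.mulLeft ℝ ℓ) ⊓ P = ⊥ := by
        rw [eq_bot_iff]
        refine le_trans (inf_le_inf (Submodule.map_mono hU'le) hPle) ?_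
        exact le_of_eq (map_inf_primitive hHL hi)
      have hdis2 : V'.map (LinearMap.mulLeft ℝ ℓ) ⊓ N = ⊥ := by
        rw [eq_bot_iff]
        refine le_trans (inf_le_inf (Submodule.map_mono hV'le) hNle) ?_
        exact le_of_eq (map_inf_primitive hHL hi)
      have c1 := Submodule.finrank_sup_add_finrank_inf_eq
        (U'.map (LinearMap.mulLeft ℝ ℓ)) P
      have c2 := Submodule.finrank_sup_add_finrank_inf_eq
        (V'.map (LinearMap.mulLeft ℝ ℓ)) N
      rw [hdis1] at c1
      rw [hdis2] at c2
      simp only [finrank_bot, add_zero] at c1 c2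
      rw [Finset.sum_range_succ]
      have c1' : (finrank ℝ ↥(U'.map (LinearMap.mulLeft ℝ ℓ) ⊔ P) : ℤ)
          = finrank ℝ U' + finrank ℝ P := by rw [c1, hrk1]; push_cast; ring
      have c2' : (finrank ℝ ↥(V'.map (LinearMap.mulLeft ℝ ℓ) ⊔ N) : ℤ)
          = finrank ℝ V' + finrank ℝ N := by rw [c2, hrk2]; push_cast; ring
      rw [c1', c2']
      linarith [hdiff', hd₀]

end AuxStructure

/-- Given Hard Lefschetz, the Hodge–Riemann relations hold in all degrees up to `m`
iff for every `i ≤ m` the signature of `Q_ℓ(x) = deg (x² ℓ^(d-2i))` on `H^i` equals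
`∑_{j=0}^i (-1)^j dim P^j`. -/
theorem hodge_riemann_iff_signature
    (A : Type) [CommRing A] [Algebra ℝ A] (g : ℕ → Submodule ℝ A) (d : ℕ)
    (dg : A →ₗ[ℝ] ℝ) (hPD : IsPDAlgebra A g d dg) (ℓ : A) (hℓ : ℓ ∈ g 1)
    (hHL : HardLefschetz A g d ℓ) (m : ℕ) (hm : 2 * m ≤ d) :
    (∀ i, i ≤ m → HodgeRiemannAt A g d dg i ℓ) ↔
      (∀ i, i ≤ m →
        signatureOn A (g i) (fun x => dg (x * x * ℓ ^ (d - 2 * i))) =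
          ∑ j ∈ Finset.range (i + 1),
            (-1 : ℤ) ^ j * (Module.finrank ℝ (Primitive A g d j ℓ) : ℤ)) := by
  haveI : FiniteDimensional ℝ A := hPD.2.2.2.2.1
  constructor
  · intro hHR i him
    obtain ⟨P, N, hPN, hP, hN, hd0⟩ := hr_split (dg := dg) (hHR i him)
    obtain ⟨U, V, hsup, hpos, hneg, hdiff⟩ :=
      decomp hPD hℓ hHL i (by omega) (fun j hj => hHR j (by omega)) P N hPN hP hN
    rw [signatureOn_eq_of_decomp hsup hpos hneg, Finset.sum_range_succ]
    linarith [hdiff, hd0]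
  · intro hsig i
    induction i using Nat.strong_induction_on with
    | _ i IH =>
      intro him
      have hi : 2*i ≤ d := by omega
      have hnd := primitive_nondeg hPD hℓ hHL hi
      set φ : A →ₗ[ℝ] A →ₗ[ℝ] ℝ :=
        (LinearMap.mul ℝ A).compr₂ (dg ∘ₗ LinearMap.mulRight ℝ (ℓ^(d-2*i))) with hφdef
      have hφapp : ∀ x y : A, φ x y = dg (x*y*ℓ^(d-2*i)) := fun x y => rfl
      obtain ⟨P, N, hPle, hNle, hPN, hrank, hPpos, hNneg⟩ :=
        exists_posneg_split φ (fun x y => by rw [hφapp, hφapp, mul_comm x y])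
          (Primitive A g d i ℓ)
          (fun x hx h => hnd x hx (fun y hy => by rw [← hφapp]; exact h y hy))
      have hPpos' : ∀ x ∈ P, x ≠ 0 → 0 < dg (x*x*ℓ^(d-2*i)) := fun x hx h0 => by
        rw [← hφapp]; exact hPpos x hx h0
      have hNneg' : ∀ x ∈ N, x ≠ 0 → dg (x*x*ℓ^(d-2*i)) < 0 := fun x hx h0 => by
        rw [← hφapp]; exact hNneg x hx h0
      obtain ⟨U, V, hsup, hpos, hneg, hdiff⟩ :=
        decomp hPD hℓ hHL i hi (fun j hj => IH j hj (by omega)) P N hPN hPpos' hNneg'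
      have hsigi := hsig i him
      rw [signatureOn_eq_of_decomp hsup hpos hneg, Finset.sum_range_succ] at hsigi
      have hrk : (finrank ℝ P : ℤ) + finrank ℝ N = finrank ℝ (Primitive A g d i ℓ) := by
        exact_mod_cast hrank
      intro x hx h0
      rcases Nat.even_or_odd i with he | ho
      · have hNZ : (finrank ℝ N : ℤ) = 0 := by
          rw [he.neg_one_pow, one_mul] at hsigi
          linarith [hdiff, hsigi, hrk]
        have hN0 : finrank ℝ N = 0 := by exact_mod_cast hNZ
        have hNbot : N = ⊥ := Submodule.finrank_eq_zero.mp hN0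
        have hPP : P = Primitive A g d i ℓ := by rw [← hPN, hNbot, sup_bot_eq]
        rw [he.neg_one_pow, one_mul]
        exact hPpos' x (hPP ▸ hx) h0
      · have hPZ : (finrank ℝ P : ℤ) = 0 := by
          rw [ho.neg_one_pow] at hsigi
          linarith [hdiff, hsigi, hrk]
        have hP0 : finrank ℝ P = 0 := by exact_mod_cast hPZ
        have hPbot : P = ⊥ := Submodule.finrank_eq_zero.mp hP0
        have hNN : N = Primitive A g d i ℓ := by rw [← hPN, hPbot, bot_sup_eq]
        rw [ho.neg_one_pow]
        have := hNneg' x (hNN ▸ hx) h0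
        linarith
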